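/- If f, p ∈ ℝ[x_1,...,x_n] both have degree at most d and p belongs to the truncated pre-ordering 𝒯(1±x_1,...,1±x_n)_d, then the polynomial f + ‖p − f‖_{1,T} also belongs to 𝒯(1±x_1,...,1±x_n)_d. -/

import Mathlib

open MvPolynomial

/-- Truncated pre-ordering generated by the polynomials `g i`, with degree bound `r`. -/
def truncPre {σ ι : Type} [Fintype ι] [DecidableEq ι]
    (g : ι → MvPolynomial σ ℝ) (r : ℕ) : Set (MvPolynomial σ ℝ) :=
  {p | ∃ s : Finset ι → MvPolynomial σ ℝ,
    (∀ I, IsSumSq (s I)) ∧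
    (∀ I : Finset ι, (s I * ∏ i ∈ I, g i).totalDegree ≤ r) ∧
    p = ∑ I : Finset ι, s I * ∏ i ∈ I, g i}

/-- The `2n` generators `1 ± x_i`, indexed by a variable together with a sign. -/
noncomputable def pmGen {σ : Type} (v : σ × Bool) : MvPolynomial σ ℝ :=
  if v.2 then 1 + MvPolynomial.X v.1 else 1 - MvPolynomial.X v.1

/-- Multivariate Chebyshev polynomial `T_α(x) = ∏_i T_{α i}(x_i)`. -/
noncomputable def chebT {n : ℕ} (α : Fin n → ℕ) : MvPolynomial (Fin n) ℝ :=
  ∏ i, Polynomial.aeval (MvPolynomial.X i) (Polynomial.Chebyshev.T ℝ (α i))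

lemma isSumSq_mul_sq {R : Type*} [CommSemiring R] {b : R} (hb : IsSumSq b) :
    ∀ x : R, IsSumSq (x * x * b) := by
  induction hb with
  | zero => intro x; simpa using IsSumSq.zero
  | @sq_add c S hS ih =>
      intro x
      have h : x * x * (c * c + S) = (x*c)*(x*c) + x*x*S := by ring
      rw [h]
      exact IsSumSq.sq_add _ (ih x)

lemma IsSumSq.mul' {R : Type*} [CommSemiring R] {a b : R} (ha : IsSumSq a) (hb : IsSumSq b) :
    IsSumSq (a * b) := by
  induction ha with
  | zero => simpa using IsSumSq.zero
  | @sq_add c S hS ih =>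
      have h : (c * c + S) * b = c*c*b + S*b := by ring
      rw [h]
      exact (isSumSq_mul_sq hb c).add ih

lemma cheb_deg_lead : ∀ k : ℕ,
    (Polynomial.Chebyshev.T ℝ k).natDegree ≤ k ∧
      (Polynomial.Chebyshev.T ℝ k).coeff k = 2 ^ (k - 1)
  | 0 => by simp [Polynomial.Chebyshev.T_zero]
  | 1 => by simp [Polynomial.Chebyshev.T_one]
  | (k+2) => by
      obtain ⟨h1d, h1c⟩ := cheb_deg_lead (k+1)
      obtain ⟨h0d, h0c⟩ := cheb_deg_lead k
      have hcast : ((k+2 : ℕ) : ℤ) = (k:ℤ)+2 := by push_cast; ring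
      have hcast1 : ((k+1 : ℕ) : ℤ) = (k:ℤ)+1 := by push_cast; ring
      rw [hcast1] at h1d h1c
      have hrec : Polynomial.Chebyshev.T ℝ ((k:ℤ)+2)
          = 2 * Polynomial.X * Polynomial.Chebyshev.T ℝ ((k:ℤ)+1) - Polynomial.Chebyshev.T ℝ k :=
        Polynomial.Chebyshev.T_add_two ℝ k
      rw [hcast, hrec]
      constructor
      · apply le_trans (Polynomial.natDegree_sub_le _ _)
        apply max_le _ (le_trans h0d (by omega))
        apply le_trans (Polynomial.natDegree_mul_le)
        have h2 : (2 * Polynomial.X : Polynomial ℝ).natDegree ≤ 1 :=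
          le_trans Polynomial.natDegree_mul_le (by simp)
        omega
      · rw [Polynomial.coeff_sub, mul_assoc, Polynomial.coeff_ofNat_mul,
          Polynomial.coeff_X_mul,
          Polynomial.coeff_eq_zero_of_natDegree_lt (lt_of_le_of_lt h0d (by omega)), h1c]
        simp only [Nat.add_sub_cancel, sub_zero]
        rw [show k+2-1 = k+1 from rfl, pow_succ]
        ring

section chebIdent
open Polynomial.Chebyshev
lemma cheb_plus_odd (m : ℤ) :
    (T ℝ (m+1) + T ℝ m)^2 = (1 + Polynomial.X) * (1 + T ℝ (2*m+1)) := by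
  have A := T_mul_T ℝ (m+1) (m+1)
  have B := T_mul_T ℝ (m+1) m
  have Cc := T_mul_T ℝ m m
  have D := T_mul_T ℝ (2*m+1) 1
  rw [show (m+1)+(m+1) = 2*m+2 by ring, show (m+1)-(m+1) = (0:ℤ) by ring, T_zero] at A
  rw [show (m+1)+m = 2*m+1 by ring, show (m+1)-m = (1:ℤ) by ring, T_one] at B
  rw [show (2*m+1)+1 = 2*m+2 by ring, show (2*m+1)-1 = 2*m by ring, T_one] at D
  rw [show (m+m : ℤ) = 2*m by ring, show (m-m : ℤ) = 0 by ring, T_zero] at Cc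
  have h2 : (2 : Polynomial ℝ) ≠ 0 := by
    intro h
    have := congrArg (Polynomial.eval 0) h
    norm_num at this
  refine mul_left_cancel₀ h2 ?_
  linear_combination A + 2*B + Cc - D

lemma cheb_minus_odd (m : ℤ) :
    (T ℝ (m+1) - T ℝ m)^2 = (1 - Polynomial.X) * (1 - T ℝ (2*m+1)) := by
  have A := T_mul_T ℝ (m+1) (m+1)
  have B := T_mul_T ℝ (m+1) m
  have Cc := T_mul_T ℝ m m
  have D := T_mul_T ℝ (2*m+1) 1
  rw [show (m+1)+(m+1) = 2*m+2 by ring, show (m+1)-(m+1) = (0:ℤ) by ring, T_zero] at A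
  rw [show (m+1)+m = 2*m+1 by ring, show (m+1)-m = (1:ℤ) by ring, T_one] at B
  rw [show (2*m+1)+1 = 2*m+2 by ring, show (2*m+1)-1 = 2*m by ring, T_one] at D
  rw [show (m+m : ℤ) = 2*m by ring, show (m-m : ℤ) = 0 by ring, T_zero] at Cc
  have h2 : (2 : Polynomial ℝ) ≠ 0 := by
    intro h
    have := congrArg (Polynomial.eval 0) h
    norm_num at this
  refine mul_left_cancel₀ h2 ?_
  linear_combination A - 2*B + Cc - D

lemma cheb_eval_one : ∀ j : ℕ, (T ℝ j).eval 1 = 1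
  | 0 => by simp [T_zero]
  | 1 => by simp [T_one]
  | (j+2) => by
      have h1 := cheb_eval_one (j+1)
      have h0 := cheb_eval_one j
      rw [show ((j+2:ℕ):ℤ) = (j:ℤ)+2 by push_cast; ring, T_add_two,
        show ((j+1:ℕ):ℤ) = (j:ℤ)+1 from by push_cast; ring] at *
      simp only [Polynomial.eval_sub, Polynomial.eval_mul, Polynomial.eval_ofNat,
        Polynomial.eval_X] at *
      rw [h1, h0]; ring

lemma cheb_eval_negone : ∀ j : ℕ, (T ℝ j).eval (-1) = (-1)^j
  | 0 => by simp [T_zero]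
  | 1 => by simp [T_one]
  | (j+2) => by
      have h1 := cheb_eval_negone (j+1)
      have h0 := cheb_eval_negone j
      rw [show ((j+2:ℕ):ℤ) = (j:ℤ)+2 by push_cast; ring, T_add_two,
        show ((j+1:ℕ):ℤ) = (j:ℤ)+1 from by push_cast; ring] at *
      simp only [Polynomial.eval_sub, Polynomial.eval_mul, Polynomial.eval_ofNat,
        Polynomial.eval_X] at *
      rw [h1, h0]; ring

end chebIdent

/-- Expansion of `aeval (X i) q` as a sum of monomials. -/
lemma aeval_X_eq_sum {σ : Type} (i : σ) (q : Polynomial ℝ) :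
    Polynomial.aeval (X i) q =
      ∑ k ∈ Finset.range (q.natDegree + 1),
        monomial (Finsupp.single i k) (q.coeff k) := by
  rw [Polynomial.aeval_eq_sum_range]
  refine Finset.sum_congr rfl fun k _ => ?_
  rw [smul_eq_C_mul, C_mul_X_pow_eq_monomial]

lemma totalDegree_aeval_X_le {σ : Type} (i : σ) (q : Polynomial ℝ) :
    (Polynomial.aeval (X i) q : MvPolynomial σ ℝ).totalDegree ≤ q.natDegree := by
  rw [aeval_X_eq_sum]
  refine le_trans (totalDegree_finset_sum _ _) ?_
  refine Finset.sup_le fun k hk => ?_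
  refine le_trans (totalDegree_monomial_le _ _) ?_
  rw [Finsupp.sum_single_index]
  · exact Nat.lt_succ_iff.mp (Finset.mem_range.mp hk)
  · rfl

lemma coeff_prod_aeval {σ : Type} [DecidableEq σ] (q : σ → Polynomial ℝ)
    (s : Finset σ) (m : σ →₀ ℕ) :
    coeff m (∏ i ∈ s, Polynomial.aeval (X i) (q i)) =
      if m.support ⊆ s then ∏ i ∈ s, (q i).coeff (m i) else 0 := by
  classical
  induction s using Finset.induction_on generalizing m with
  | empty =>
      simp only [Finset.prod_empty, coeff_one, Finset.subset_empty,
        Finsupp.support_eq_empty]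
      by_cases h : m = 0 <;> simp [h, eq_comm]
  | insert a s ha ih =>
      rw [Finset.prod_insert ha, aeval_X_eq_sum, Finset.sum_mul, coeff_sum]
      have hterm : ∀ k ∈ Finset.range ((q a).natDegree + 1), k ≠ m a →
          coeff m (monomial (Finsupp.single a k) ((q a).coeff k)
            * ∏ i ∈ s, Polynomial.aeval (X i) (q i)) = 0 := by
        intro k _ hk
        rw [coeff_monomial_mul']
        by_cases hle : Finsupp.single a k ≤ m
        · rw [if_pos hle, ih]
          have hka : k < m a := lt_of_le_of_ne (Finsupp.single_le_iff.mp hle) hk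
          have hmem : a ∈ (m - Finsupp.single a k).support := by
            rw [Finsupp.mem_support_iff, Finsupp.tsub_apply, Finsupp.single_eq_same]
            omega
          rw [if_neg (fun hsub => ha (hsub hmem)), mul_zero]
        · rw [if_neg hle]
      rw [Finset.sum_eq_single (m a) hterm]
      · rw [coeff_monomial_mul', if_pos (Finsupp.single_le_iff.mpr le_rfl), ih]
        have hself : (m - Finsupp.single a (m a)) a = 0 := by
          rw [Finsupp.tsub_apply, Finsupp.single_eq_same]; omega
        have happ : ∀ i ∈ s, (m - Finsupp.single a (m a)) i = m i := by
          intro i hi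
          rw [Finsupp.tsub_apply, Finsupp.single_eq_of_ne (fun h => ha (by rw [← h]; exact hi))]
          omega
        have hsupp : (m - Finsupp.single a (m a)).support ⊆ s ↔ m.support ⊆ insert a s := by
          constructor
          · intro h x hx
            by_cases hxa : x = a
            · exact hxa ▸ Finset.mem_insert_self a s
            · refine Finset.mem_insert_of_mem (h ?_)
              rw [Finsupp.mem_support_iff, Finsupp.tsub_apply,
                Finsupp.single_eq_of_ne hxa]
              simpa [Finsupp.mem_support_iff] using hx
          · intro h x hx
            rw [Finsupp.mem_support_iff] at hx
            have hxa : x ≠ a := fun hxa => hx (hxa ▸ hself)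
            have : x ∈ m.support := by
              rw [Finsupp.mem_support_iff]
              rw [Finsupp.tsub_apply, Finsupp.single_eq_of_ne hxa] at hx
              omega
            exact (Finset.mem_insert.mp (h this)).resolve_left hxa
        by_cases hcond : m.support ⊆ insert a s
        · rw [if_pos (hsupp.mpr hcond), if_pos hcond, Finset.prod_insert ha]
          rw [Finset.prod_congr rfl (fun i hi => by rw [happ i hi])]
        · rw [if_neg (fun h => hcond (hsupp.mp h)), if_neg hcond, mul_zero]
      · intro hma
        have : (q a).coeff (m a) = 0 :=
          Polynomial.coeff_eq_zero_of_natDegree_lt (by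
            simpa [Nat.lt_succ_iff] using Finset.mem_range.not.mp hma |> fun h => by omega)
        rw [coeff_monomial_mul', this, zero_mul, if_pos (Finsupp.single_le_iff.mpr le_rfl)]

variable {σ ι : Type} [Fintype ι] [DecidableEq ι] {g : ι → MvPolynomial σ ℝ} {r r' : ℕ}

lemma truncPre.mono (h : r ≤ r') : truncPre g r ⊆ truncPre g r' := by
  rintro p ⟨s, h1, h2, h3⟩
  exact ⟨s, h1, fun I => le_trans (h2 I) h, h3⟩

lemma truncPre.zero_mem : (0 : MvPolynomial σ ℝ) ∈ truncPre g r := by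
  refine ⟨fun _ => 0, fun I => IsSumSq.zero, fun I => by simp, by simp⟩

lemma truncPre.add_mem {a b : MvPolynomial σ ℝ} (ha : a ∈ truncPre g r)
    (hb : b ∈ truncPre g r) : a + b ∈ truncPre g r := by
  obtain ⟨s, hs1, hs2, hs3⟩ := ha
  obtain ⟨t, ht1, ht2, ht3⟩ := hb
  refine ⟨fun I => s I + t I, fun I => (hs1 I).add (ht1 I), fun I => ?_, ?_⟩
  · rw [add_mul]
    exact le_trans (totalDegree_add _ _) (max_le (hs2 I) (ht2 I))
  · rw [hs3, ht3, ← Finset.sum_add_distrib]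
    exact Finset.sum_congr rfl fun I _ => by ring

lemma truncPre.single_mem (I : Finset ι) {w : MvPolynomial σ ℝ} (hw : IsSumSq w)
    (hd : (w * ∏ i ∈ I, g i).totalDegree ≤ r) : w * ∏ i ∈ I, g i ∈ truncPre g r := by
  refine ⟨fun J => if J = I then w else 0, fun J => ?_, fun J => ?_, ?_⟩
  · by_cases h : J = I <;> simp [h, hw, IsSumSq.zero]
  · by_cases h : J = I <;> simp [h, hd]
  · rw [Finset.sum_eq_single I (fun J _ hJ => by simp [hJ]) (fun h => absurd (Finset.mem_univ I) h)]
    simp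

lemma truncPre.sum_mem {α : Type*} (s : Finset α) (f : α → MvPolynomial σ ℝ)
    (h : ∀ a ∈ s, f a ∈ truncPre g r) : ∑ a ∈ s, f a ∈ truncPre g r := by
  classical
  induction s using Finset.induction_on with
  | empty => simpa using truncPre.zero_mem
  | insert x s hx ih =>
      rw [Finset.sum_insert hx]
      exact truncPre.add_mem (h x (Finset.mem_insert_self x s))
        (ih fun a ha => h a (Finset.mem_insert_of_mem ha))

lemma prod_mul_prod_eq (I J : Finset ι) (g : ι → MvPolynomial σ ℝ) :
    (∏ i ∈ I, g i) * ∏ i ∈ J, g i =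
      ((∏ i ∈ I ∩ J, g i) * ∏ i ∈ I ∩ J, g i) * ∏ i ∈ symmDiff I J, g i := by
  rw [← Finset.prod_union_inter]
  have h1 : symmDiff I J ∪ I ∩ J = I ∪ J := symmDiff_sup_inf I J
  have h2 : Disjoint (symmDiff I J) (I ∩ J) := disjoint_symmDiff_inf I J
  rw [← h1, Finset.prod_union h2]
  ring

lemma truncPre.mul_mem {a b : MvPolynomial σ ℝ} {r1 r2 : ℕ} (ha : a ∈ truncPre g r1)
    (hb : b ∈ truncPre g r2) : a * b ∈ truncPre g (r1 + r2) := by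
  obtain ⟨s, hs1, hs2, hs3⟩ := ha
  obtain ⟨t, ht1, ht2, ht3⟩ := hb
  rw [hs3, ht3, Finset.sum_mul_sum]
  refine truncPre.sum_mem _ _ fun I _ => truncPre.sum_mem _ _ fun J _ => ?_
  have key : (s I * ∏ i ∈ I, g i) * (t J * ∏ i ∈ J, g i) =
      (((∏ i ∈ I ∩ J, g i) * (∏ i ∈ I ∩ J, g i)) * (s I * t J)) * ∏ i ∈ symmDiff I J, g i := by
    rw [show (s I * ∏ i ∈ I, g i) * (t J * ∏ i ∈ J, g i)
        = (s I * t J) * ((∏ i ∈ I, g i) * ∏ i ∈ J, g i) by ring, prod_mul_prod_eq]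
    ring
  rw [key]
  refine truncPre.single_mem _ (isSumSq_mul_sq ((hs1 I).mul' (ht1 J)) _) ?_
  rw [← key]
  exact le_trans (totalDegree_mul _ _) (add_le_add (hs2 I) (ht2 J))

lemma truncPre.const_mem {x : ℝ} (hx : 0 ≤ x) : (C x : MvPolynomial σ ℝ) ∈ truncPre g r := by
  have h : (C x : MvPolynomial σ ℝ) = C (Real.sqrt x) * C (Real.sqrt x) * ∏ i ∈ (∅ : Finset ι), g i := by
    rw [Finset.prod_empty, mul_one, ← C_mul, Real.mul_self_sqrt hx]
  rw [h]
  refine truncPre.single_mem _ ?_ ?_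
  · simpa using IsSumSq.sq_add (C (Real.sqrt x) : MvPolynomial σ ℝ) 0 IsSumSq.zero
  · rw [← h]; simp

lemma truncPre.const_mul_mem {x : ℝ} (hx : 0 ≤ x) {a : MvPolynomial σ ℝ}
    (ha : a ∈ truncPre g r) : C x * a ∈ truncPre g r := by
  have := truncPre.mul_mem (truncPre.const_mem (g := g) (r := 0) hx) ha
  simpa using this

lemma truncPre.half_mem {a : MvPolynomial σ ℝ} (ha : C 2 * a ∈ truncPre g r) :
    a ∈ truncPre g r := by
  have h : a = C (1/2 : ℝ) * (C 2 * a) := by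
    rw [← mul_assoc, ← C_mul]; norm_num
  rw [h]
  exact truncPre.const_mul_mem (by norm_num) ha


section univar
variable {σ : Type} [Fintype σ] [DecidableEq σ]

open Polynomial.Chebyshev

lemma prod_pm_singleton (i : σ) (b : Bool) :
    ∏ v ∈ ({(i, b)} : Finset (σ × Bool)), pmGen v = pmGen (i, b) := by
  simp

lemma totalDegree_pm (i : σ) (b : Bool) : (pmGen (i, b)).totalDegree ≤ 1 := by
  cases b <;> simp only [pmGen] <;> simp only [if_true, if_false, Bool.false_eq_true] <;>
    [skip; skip] <;>
  · first
    | (rw [sub_eq_add_neg]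
       exact le_trans (totalDegree_add _ _)
        (max_le (by simp) (by rw [totalDegree_neg]; simp [totalDegree_X])))
    | exact le_trans (totalDegree_add _ _) (max_le (by simp) (by simp [totalDegree_X]))

lemma onePM_univar (i : σ) (k : ℕ) : ∀ ε : ℝ, (ε = 1 ∨ ε = -1) →
    (1 - C ε * Polynomial.aeval (X i) (T ℝ k) : MvPolynomial σ ℝ)
      ∈ truncPre (pmGen (σ := σ)) k := by
  induction k using Nat.strong_induction_on with
  | _ k ih =>
  intro ε hε
  rcases Nat.even_or_odd k with ⟨m, hm⟩ | ⟨m, hm⟩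
  · -- even, k = m + m
    rcases Nat.eq_zero_or_pos m with hm0 | hmpos
    · have hk0 : k = 0 := by omega
      subst hk0
      have : (1 - C ε * Polynomial.aeval (X i) (T ℝ (0:ℕ)) : MvPolynomial σ ℝ) = C (1 - ε) := by
        push_cast
        rw [T_zero]
        simp
      rw [this]
      exact truncPre.const_mem (by rcases hε with h | h <;> rw [h] <;> norm_num)
    · set t : MvPolynomial σ ℝ := Polynomial.aeval (X i) (T ℝ (m:ℤ)) with ht
      have hTT : (2 : Polynomial ℝ) * T ℝ (m:ℤ) * T ℝ (m:ℤ) = T ℝ ((k:ℕ):ℤ) + 1 := by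
        have h := T_mul_T ℝ (m:ℤ) (m:ℤ)
        rw [show (m:ℤ)+(m:ℤ) = ((k:ℕ):ℤ) by push_cast [hm]; ring,
          show (m:ℤ)-(m:ℤ) = 0 by ring, T_zero] at h
        exact h
      have htk : (Polynomial.aeval (X i) (T ℝ ((k:ℕ):ℤ)) : MvPolynomial σ ℝ) = 2*t*t - 1 := by
        have h := congrArg (Polynomial.aeval (X i : MvPolynomial σ ℝ)) hTT
        simp only [map_mul, map_add, map_one, map_ofNat] at h
        rw [← ht] at h
        linear_combination -h
      have hdegt : t.totalDegree ≤ m :=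
        le_trans (totalDegree_aeval_X_le i _) (cheb_deg_lead m).1
      rcases hε with h1 | h1 <;> subst h1
      · have hid : (1 - C (1:ℝ) * Polynomial.aeval (X i) (T ℝ ((k:ℕ):ℤ)) : MvPolynomial σ ℝ)
            = C (2:ℝ) * ((1 - C (1:ℝ) * t) * (1 - C (-1:ℝ) * t)) := by
          rw [htk, map_one, map_neg, map_one, show (C (2:ℝ) : MvPolynomial σ ℝ) = 2 from map_ofNat MvPolynomial.C 2]
          ring
        rw [hid]
        have hmm : m + m = k := hm.symm
        refine hmm ▸ truncPre.const_mul_mem (by norm_num) (truncPre.mul_mem ?_ ?_)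
        · exact ih m (by omega) 1 (Or.inl rfl)
        · exact ih m (by omega) (-1) (Or.inr rfl)
      · have hid : (1 - C (-1:ℝ) * Polynomial.aeval (X i) (T ℝ ((k:ℕ):ℤ)) : MvPolynomial σ ℝ)
            = (t*t + t*t) * ∏ v ∈ (∅ : Finset (σ × Bool)), pmGen v := by
          rw [htk, map_neg, map_one, Finset.prod_empty, mul_one]
          ring
        rw [hid]
        refine truncPre.single_mem ∅ ?_ ?_
        · simpa using IsSumSq.sq_add t (IsSumSq.sq_add t IsSumSq.zero)
        · rw [Finset.prod_empty, mul_one]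
          refine le_trans (totalDegree_add _ _) (max_le ?_ ?_) <;>
            exact le_trans (totalDegree_mul _ _) (by omega)
  · -- odd, k = 2m+1
    have hkz : ((k:ℕ):ℤ) = 2*(m:ℤ)+1 := by push_cast [hm]; ring
    rcases hε with h1 | h1 <;> subst h1
    · -- ε = 1 : 1 - T_k = (u*u)*(1 - X i)
      obtain ⟨u, hu⟩ : (Polynomial.X - Polynomial.C (1:ℝ)) ∣ (T ℝ ((m:ℤ)+1) - T ℝ (m:ℤ)) := by
        refine Polynomial.dvd_iff_isRoot.mpr ?_
        have e1 : (T ℝ ((m:ℤ)+1)).eval 1 = 1 := by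
          rw [show ((m:ℤ)+1) = ((m+1:ℕ):ℤ) by push_cast; ring]; exact cheb_eval_one (m+1)
        have e0 : (T ℝ (m:ℤ)).eval 1 = 1 := cheb_eval_one m
        simp [Polynomial.IsRoot, e1, e0]
      have hXne : (1 - Polynomial.X : Polynomial ℝ) ≠ 0 := by
        intro h
        have := congrArg (Polynomial.eval 0) h
        norm_num at this
      have hk1 : (1 : Polynomial ℝ) - T ℝ (2*(m:ℤ)+1) = (1 - Polynomial.X) * (u*u) := by
        refine mul_left_cancel₀ hXne ?_
        rw [← cheb_minus_odd m, hu, Polynomial.C_1]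
        ring
      have hudeg : u.natDegree ≤ m := by
        by_cases hu0 : u = 0
        · simp [hu0]
        · have hXu : (Polynomial.X - Polynomial.C (1:ℝ)).natDegree + u.natDegree
              = (T ℝ ((m:ℤ)+1) - T ℝ (m:ℤ)).natDegree := by
            rw [hu, Polynomial.natDegree_mul (Polynomial.X_sub_C_ne_zero 1) hu0]
          rw [Polynomial.natDegree_X_sub_C] at hXu
          have hTd : (T ℝ ((m:ℤ)+1) - T ℝ (m:ℤ)).natDegree ≤ m + 1 := by
            refine le_trans (Polynomial.natDegree_sub_le _ _) (max_le ?_ ?_)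
            · rw [show ((m:ℤ)+1) = ((m+1:ℕ):ℤ) by push_cast; ring]
              exact le_trans (cheb_deg_lead (m+1)).1 le_rfl
            · exact le_trans (cheb_deg_lead m).1 (by omega)
          omega
      set w : MvPolynomial σ ℝ := Polynomial.aeval (X i) u with hw
      have hmap : (1 : MvPolynomial σ ℝ) - Polynomial.aeval (X i) (T ℝ (2*(m:ℤ)+1))
          = (1 - X i) * (w*w) := by
        have h := congrArg (Polynomial.aeval (X i : MvPolynomial σ ℝ)) hk1
        simpa only [map_mul, map_sub, map_one, Polynomial.aeval_X] using h
      have hid : (1 - C (1:ℝ) * Polynomial.aeval (X i) (T ℝ ((k:ℕ):ℤ)) : MvPolynomial σ ℝ)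
          = (w*w) * ∏ v ∈ ({(i, false)} : Finset (σ × Bool)), pmGen v := by
        rw [map_one, one_mul, hkz, prod_pm_singleton]
        show _ = (w*w) * pmGen (i, false)
        rw [show pmGen (i, false) = 1 - X i from rfl]
        rw [hmap]
        ring
      rw [hid]
      refine truncPre.single_mem _ ?_ ?_
      · simpa using IsSumSq.sq_add w 0 IsSumSq.zero
      · rw [prod_pm_singleton]
        refine le_trans (totalDegree_mul _ _) ?_
        have h1 : (w*w).totalDegree ≤ m + m :=
          le_trans (totalDegree_mul _ _)
            (add_le_add (le_trans (totalDegree_aeval_X_le i u) hudeg)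
              (le_trans (totalDegree_aeval_X_le i u) hudeg))
        have h2 := totalDegree_pm i false
        omega
    · -- ε = -1 : 1 + T_k = (u*u)*(1 + X i)
      obtain ⟨u, hu⟩ : (Polynomial.X - Polynomial.C (-1:ℝ)) ∣ (T ℝ ((m:ℤ)+1) + T ℝ (m:ℤ)) := by
        refine Polynomial.dvd_iff_isRoot.mpr ?_
        have e1 : (T ℝ ((m:ℤ)+1)).eval (-1) = (-1)^(m+1) := by
          rw [show ((m:ℤ)+1) = ((m+1:ℕ):ℤ) by push_cast; ring]; exact cheb_eval_negone (m+1)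
        have e0 : (T ℝ (m:ℤ)).eval (-1) = (-1)^m := cheb_eval_negone m
        simp [Polynomial.IsRoot, e1, e0, pow_succ]
      have hXne : (1 + Polynomial.X : Polynomial ℝ) ≠ 0 := by
        intro h
        have := congrArg (Polynomial.eval 0) h
        norm_num at this
      have hk1 : (1 : Polynomial ℝ) + T ℝ (2*(m:ℤ)+1) = (1 + Polynomial.X) * (u*u) := by
        refine mul_left_cancel₀ hXne ?_
        rw [← cheb_plus_odd m, hu]
        rw [show Polynomial.C (-1:ℝ) = -1 by simp]
        ring
      have hudeg : u.natDegree ≤ m := by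
        by_cases hu0 : u = 0
        · simp [hu0]
        · have hXu : (Polynomial.X - Polynomial.C (-1:ℝ)).natDegree + u.natDegree
              = (T ℝ ((m:ℤ)+1) + T ℝ (m:ℤ)).natDegree := by
            rw [hu, Polynomial.natDegree_mul (Polynomial.X_sub_C_ne_zero (-1)) hu0]
          rw [Polynomial.natDegree_X_sub_C] at hXu
          have hTd : (T ℝ ((m:ℤ)+1) + T ℝ (m:ℤ)).natDegree ≤ m + 1 := by
            refine le_trans (Polynomial.natDegree_add_le _ _) (max_le ?_ ?_)
            · rw [show ((m:ℤ)+1) = ((m+1:ℕ):ℤ) by push_cast; ring]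
              exact le_trans (cheb_deg_lead (m+1)).1 le_rfl
            · exact le_trans (cheb_deg_lead m).1 (by omega)
          omega
      set w : MvPolynomial σ ℝ := Polynomial.aeval (X i) u with hw
      have hmap : (1 : MvPolynomial σ ℝ) + Polynomial.aeval (X i) (T ℝ (2*(m:ℤ)+1))
          = (1 + X i) * (w*w) := by
        have h := congrArg (Polynomial.aeval (X i : MvPolynomial σ ℝ)) hk1
        simpa only [map_mul, map_add, map_one, Polynomial.aeval_X] using h
      have hid : (1 - C (-1:ℝ) * Polynomial.aeval (X i) (T ℝ ((k:ℕ):ℤ)) : MvPolynomial σ ℝ)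
          = (w*w) * ∏ v ∈ ({(i, true)} : Finset (σ × Bool)), pmGen v := by
        rw [map_neg, map_one, hkz, prod_pm_singleton]
        show _ = (w*w) * pmGen (i, true)
        rw [show pmGen (i, true) = 1 + X i from rfl]
        rw [show (1 : MvPolynomial σ ℝ) - -1 * Polynomial.aeval (X i) (T ℝ (2*(m:ℤ)+1))
          = 1 + Polynomial.aeval (X i) (T ℝ (2*(m:ℤ)+1)) by ring, hmap]
        ring
      rw [hid]
      refine truncPre.single_mem _ ?_ ?_
      · simpa using IsSumSq.sq_add w 0 IsSumSq.zero
      · rw [prod_pm_singleton]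
        refine le_trans (totalDegree_mul _ _) ?_
        have h1 : (w*w).totalDegree ≤ m + m :=
          le_trans (totalDegree_mul _ _)
            (add_le_add (le_trans (totalDegree_aeval_X_le i u) hudeg)
              (le_trans (totalDegree_aeval_X_le i u) hudeg))
        have h2 := totalDegree_pm i true
        omega
end univar

section multi2
variable {σ : Type} [Fintype σ] [DecidableEq σ]

lemma onePM_multi (s : Finset σ) (α : σ → ℕ) :
    ∀ ε : ℝ, (ε = 1 ∨ ε = -1) →
    (1 - C ε * ∏ i ∈ s, Polynomial.aeval (X i) (Polynomial.Chebyshev.T ℝ (α i))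
      : MvPolynomial σ ℝ) ∈ truncPre (pmGen (σ := σ)) (∑ i ∈ s, α i) := by
  induction s using Finset.induction_on with
  | empty =>
      intro ε hε
      have : (1 - C ε * ∏ i ∈ (∅ : Finset σ), Polynomial.aeval (X i)
          (Polynomial.Chebyshev.T ℝ (α i)) : MvPolynomial σ ℝ) = C (1 - ε) := by
        rw [Finset.prod_empty, mul_one, map_sub, map_one]
      rw [this]
      exact truncPre.const_mem (by rcases hε with h | h <;> rw [h] <;> norm_num)
  | insert a s ha ih =>
      intro ε hε
      set A : MvPolynomial σ ℝ := Polynomial.aeval (X a) (Polynomial.Chebyshev.T ℝ (α a)) with hA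
      set P : MvPolynomial σ ℝ := ∏ i ∈ s, Polynomial.aeval (X i) (Polynomial.Chebyshev.T ℝ (α i)) with hP
      rw [Finset.prod_insert ha, Finset.sum_insert ha]
      refine truncPre.half_mem ?_
      have hid : C (2:ℝ) * (1 - C ε * (A * P))
          = (1 - C (1:ℝ) * A) * (1 - C (-ε) * P) + (1 - C (-1:ℝ) * A) * (1 - C ε * P) := by
        rw [show (C (2:ℝ) : MvPolynomial σ ℝ) = 2 from map_ofNat C 2, map_one, map_neg, map_neg, map_one]
        ring
      rw [hid]
      refine truncPre.add_mem ?_ ?_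
      · exact truncPre.mul_mem (onePM_univar a (α a) 1 (Or.inl rfl))
          (ih (-ε) (by rcases hε with h | h <;> rw [h] <;> norm_num))
      · exact truncPre.mul_mem (onePM_univar a (α a) (-1) (Or.inr rfl)) (ih ε hε)


end multi2

lemma support_sum_le {n d : ℕ} {q : MvPolynomial (Fin n) ℝ}
    (hq : q.totalDegree ≤ d) (c : (Fin n → ℕ) →₀ ℝ)
    (hc : q = c.sum fun α a => MvPolynomial.C a * chebT α) :
    ∀ α ∈ c.support, ∑ i, α i ≤ d := by
  intro α hα
  obtain ⟨α₀, hα₀, hmax⟩ := Finset.exists_max_image c.support (fun β => ∑ i, β i) ⟨α, hα⟩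
  refine le_trans (hmax α hα) ?_
  -- show ∑ i, α₀ i ≤ d
  set m₀ : Fin n →₀ ℕ := Finsupp.equivFunOnFinite.symm α₀ with hm₀
  have hm₀app : ∀ i, m₀ i = α₀ i := fun i => rfl
  have hcoeff : ∀ β : Fin n → ℕ, coeff m₀ (chebT β)
      = ∏ i, (Polynomial.Chebyshev.T ℝ (β i)).coeff (α₀ i) := by
    intro β
    rw [chebT, coeff_prod_aeval, if_pos (Finset.subset_univ _)]
    rfl
  have hkey : coeff m₀ q = c α₀ * ∏ i, (Polynomial.Chebyshev.T ℝ (α₀ i)).coeff (α₀ i) := by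
    rw [hc, Finsupp.sum, coeff_sum]
    rw [Finset.sum_eq_single α₀]
    · rw [coeff_C_mul, hcoeff]
    · intro β hβ hβne
      rw [coeff_C_mul, hcoeff]
      by_cases hall : ∀ i, α₀ i ≤ β i
      · exfalso
        have hsum : ∑ i, β i ≤ ∑ i, α₀ i := hmax β hβ
        have : ∀ i, α₀ i = β i := by
          intro i
          by_contra hne
          have hlt : α₀ i < β i := lt_of_le_of_ne (hall i) hne
          have : ∑ i, α₀ i < ∑ i, β i :=
            Finset.sum_lt_sum (fun j _ => hall j) ⟨i, Finset.mem_univ i, hlt⟩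
          omega
        exact hβne (funext fun i => (this i).symm)
      · push_neg at hall
        obtain ⟨i, hi⟩ := hall
        have : (Polynomial.Chebyshev.T ℝ (β i)).coeff (α₀ i) = 0 :=
          Polynomial.coeff_eq_zero_of_natDegree_lt
            (lt_of_le_of_lt (cheb_deg_lead (β i)).1 hi)
        rw [Finset.prod_eq_zero (Finset.mem_univ i) this, mul_zero]
    · intro h
      exact absurd hα₀ h
  have hlead : ∏ i, (Polynomial.Chebyshev.T ℝ (α₀ i)).coeff (α₀ i) ≠ 0 := by
    refine Finset.prod_ne_zero_iff.mpr fun i _ => ?_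
    rw [(cheb_deg_lead (α₀ i)).2]
    positivity
  have hc0 : c α₀ ≠ 0 := Finsupp.mem_support_iff.mp hα₀
  have hne : coeff m₀ q ≠ 0 := by rw [hkey]; exact mul_ne_zero hc0 hlead
  have hmem : m₀ ∈ q.support := MvPolynomial.mem_support_iff.mpr hne
  have := MvPolynomial.le_totalDegree hmem
  have hsum : (m₀.sum fun _ e => e) = ∑ i, α₀ i := by
    rw [Finsupp.sum_fintype]
    · rfl
    · intro i; rfl
  omega


/-- If `f, p` have degree at most `d`, `p ∈ 𝒯(1±x_1,...,1±x_n)_d`, and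
`p − f = ∑_α c_α T_α` is the Chebyshev expansion of `p − f`, then
`f + ‖p − f‖_{1,T} ∈ 𝒯(1±x_1,...,1±x_n)_d`. -/
theorem add_chebNorm_mem_truncPre (n d : ℕ) (f p : MvPolynomial (Fin n) ℝ)
    (hf : f.totalDegree ≤ d) (hp : p.totalDegree ≤ d)
    (hpT : p ∈ truncPre (pmGen (σ := Fin n)) d)
    (c : (Fin n → ℕ) →₀ ℝ)
    (hc : p - f = c.sum fun α a => MvPolynomial.C a * chebT α) :
    f + MvPolynomial.C (c.sum fun _ a => |a|) ∈ truncPre (pmGen (σ := Fin n)) d := by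
  have hqdeg : (p - f).totalDegree ≤ d := by
    rw [sub_eq_add_neg]
    exact le_trans (totalDegree_add _ _) (max_le hp (by rwa [totalDegree_neg]))
  have hsupp := support_sum_le hqdeg c hc
  have hterm : ∀ α ∈ c.support,
      (C |c α| - C (c α) * chebT α : MvPolynomial (Fin n) ℝ) ∈ truncPre (pmGen (σ := Fin n)) d := by
    intro α hα
    set ε : ℝ := if 0 ≤ c α then 1 else -1 with hε
    have hεabs : |c α| * ε = c α := by
      by_cases h : 0 ≤ c α
      · simp [hε, h, abs_of_nonneg h]
      · push_neg at h
        simp [hε, not_le.mpr h, abs_of_neg h]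
    have hid : (C |c α| - C (c α) * chebT α : MvPolynomial (Fin n) ℝ)
        = C |c α| * (1 - C ε * chebT α) := by
      rw [mul_sub, mul_one, ← mul_assoc, ← C_mul, hεabs]
    rw [hid]
    refine truncPre.const_mul_mem (abs_nonneg _) ?_
    refine truncPre.mono (hsupp α hα) ?_
    exact onePM_multi Finset.univ α ε (by by_cases h : 0 ≤ c α <;> simp [hε, h])
  have hsplit : f + MvPolynomial.C (c.sum fun _ a => |a|)
      = p + ∑ α ∈ c.support, (C |c α| - C (c α) * chebT α) := by
    rw [Finset.sum_sub_distrib]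
    have h1 : (MvPolynomial.C (c.sum fun _ a => |a|) : MvPolynomial (Fin n) ℝ)
        = ∑ α ∈ c.support, C |c α| := by
      rw [Finsupp.sum, map_sum]
    have h2 : p - f = ∑ α ∈ c.support, C (c α) * chebT α := by
      rw [hc, Finsupp.sum]
    rw [h1]
    linear_combination -h2
  rw [hsplit]
  exact truncPre.add_mem hpT (truncPre.sum_mem _ _ hterm)
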